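/- arXiv:2504.04720 — 2 statements merged into one kernel-verified Lean document; each statement's English description precedes it below -/
import Mathlib

section
/- Let A be a bounded nonempty subset of an Ahlfors regular metric measure space (X, d, μ) of dimension Q. For ε ∈ (0,1), define ζ_A(s, A_ε) := ∫_{A_ε} d(x,A)^{s−Q} dμ(x). Then for every real ξ > dim̄_B A and every d ∈ (dim̄_B A, ξ), there exists a positive constant C₁ = C₁(ξ, d, Q, A) such that sup_{Re s ≥ ξ} |ζ_A(s, A_ε)| ≤ C₁ ε^{ξ−d} for all ε ∈ (0,1); in particular, sup_{Re s ≥ ξ} |ζ_A(s, A_ε)| = O(ε^{ξ−d}) as ε → 0⁺. -/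
/-!
Since `p > dim̄_B A`, the `r`-dimensional content of `A` vanishes for some `r < p`, which gives
`|A_t| ≤ c t^(Q-p)` for `0 < t ≤ 1`. Cut `A_ε` into `closure A` and the dyadic shells
`ε/2^(k+1) < d(x,A) ≤ ε/2^k`. On the `k`-th shell `|d(x,A)^(s-Q)| ≤ 2^|ξ-Q| (ε/2^k)^(ξ-Q)`
and the shell has measure at most `c (ε/2^k)^(Q-p)`, so it contributes at most
`2^|ξ-Q| c ε^(ξ-p) 2^(-k(ξ-p))`; summing the geometric series gives `C₁ ε^(ξ-p)`.
-/

open MeasureTheory Metric Filter Set Topology ENNReal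

noncomputable section

/-- `(X, d, μ)` is an Ahlfors regular metric measure space of dimension `Q`
with regularity constant `K`:  `K⁻¹ r^Q ≤ μ(B̄(x,r)) ≤ K r^Q` for all `x` and
all `0 < r ≤ diam X`. -/
def IsAhlfors {X : Type*} [MetricSpace X] [MeasurableSpace X] (μ : Measure X)
    (Q K : ℝ) : Prop :=
  1 ≤ K ∧ ∀ (x : X) (r : ℝ), 0 < r → ENNReal.ofReal r ≤ EMetric.diam (univ : Set X) →
    ENNReal.ofReal (K⁻¹ * r ^ Q) ≤ μ (closedBall x r) ∧
      μ (closedBall x r) ≤ ENNReal.ofReal (K * r ^ Q)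

/-- The upper `r`-dimensional Minkowski content of `A`, relative to the ambient
dimension `Q`:  `M^{*r}(A) = limsup_{t→0⁺} μ(A_t) / t^(Q-r)`, where
`A_t = cthickening t A` is the closed `t`-neighborhood of `A`. -/
def uContent {X : Type*} [MetricSpace X] [MeasurableSpace X] (μ : Measure X)
    (Q r : ℝ) (A : Set X) : ℝ≥0∞ :=
  Filter.limsup (fun t : ℝ => μ (cthickening t A) / ENNReal.ofReal (t ^ (Q - r))) (𝓝[>] 0)

/-- The lower `r`-dimensional Minkowski content of `A`. -/
def lContent {X : Type*} [MetricSpace X] [MeasurableSpace X] (μ : Measure X)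
    (Q r : ℝ) (A : Set X) : ℝ≥0∞ :=
  Filter.liminf (fun t : ℝ => μ (cthickening t A) / ENNReal.ofReal (t ^ (Q - r))) (𝓝[>] 0)

/-- The upper Minkowski dimension `dim̄_B A = inf { r ≥ 0 : M^{*r}(A) = 0 }`. -/
def uDimB {X : Type*} [MetricSpace X] [MeasurableSpace X] (μ : Measure X)
    (Q : ℝ) (A : Set X) : ℝ :=
  sInf {r : ℝ | 0 ≤ r ∧ uContent μ Q r A = 0}

/-- The lower Minkowski dimension. -/
def lDimB {X : Type*} [MetricSpace X] [MeasurableSpace X] (μ : Measure X)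
    (Q : ℝ) (A : Set X) : ℝ :=
  sInf {r : ℝ | 0 ≤ r ∧ lContent μ Q r A = 0}

theorem Real.rpow_le_two_rpow_abs_mul_rpow {a d : ℝ} (e : ℝ) (ha : 0 < a) (h₁ : a / 2 ≤ d)
    (h₂ : d ≤ a) : d ^ e ≤ 2 ^ |e| * a ^ e := by
  have hd : 0 < d := by linarith
  rcases le_or_gt 0 e with he | he
  · calc d ^ e ≤ a ^ e := Real.rpow_le_rpow hd.le h₂ he
      _ ≤ 2 ^ |e| * a ^ e :=
        le_mul_of_one_le_left (by positivity) (Real.one_le_rpow one_le_two (abs_nonneg e))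
  · calc d ^ e ≤ (a / 2) ^ e := Real.rpow_le_rpow_of_nonpos (by positivity) h₁ he.le
      _ = 2 ^ |e| * a ^ e := by
        rw [Real.div_rpow ha.le zero_le_two, abs_of_neg he, Real.rpow_neg zero_le_two]
        ring

theorem Real.div_two_pow_rpow {ε : ℝ} (hε : 0 ≤ ε) (e : ℝ) (k : ℕ) :
    (ε / 2 ^ k) ^ e = ε ^ e * ((2 : ℝ) ^ (-e)) ^ k := by
  rw [Real.div_rpow hε (by positivity), ← Real.rpow_pow_comm zero_le_two,
    Real.rpow_neg zero_le_two, inv_pow, div_eq_mul_inv]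

theorem Real.min_rpow_one_le_rpow {δ t : ℝ} (e : ℝ) (hδ : 0 < δ) (hδt : δ ≤ t) (ht : t ≤ 1) :
    min (δ ^ e) 1 ≤ t ^ e := by
  rcases le_or_gt 0 e with he | he
  · exact (min_le_left _ _).trans (Real.rpow_le_rpow hδ.le hδt he)
  · exact (min_le_right _ _).trans
      (Real.one_le_rpow_of_pos_of_le_one_of_nonpos (hδ.trans_le hδt) ht he.le)

theorem Complex.norm_ofReal_cpow_sub_le {a d ξ Q : ℝ} {s : ℂ} (hd : d ∈ Ioc (a / 2) a)
    (ha : a ≤ 1) (hs : ξ ≤ s.re) : ‖(d : ℂ) ^ (s - Q)‖ ≤ 2 ^ |ξ - Q| * a ^ (ξ - Q) := by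
  have ha₀ : 0 < a := by linarith [hd.1, hd.2]
  have hd₀ : 0 < d := (half_pos ha₀).trans hd.1
  rw [Complex.norm_cpow_eq_rpow_re_of_pos hd₀, Complex.sub_re, Complex.ofReal_re]
  calc d ^ (s.re - Q) ≤ d ^ (ξ - Q) :=
        Real.rpow_le_rpow_of_exponent_ge hd₀ (hd.2.trans ha) (by linarith)
    _ ≤ 2 ^ |ξ - Q| * a ^ (ξ - Q) :=
        Real.rpow_le_two_rpow_abs_mul_rpow _ ha₀ hd.1.le hd.2

theorem ENNReal.tendsto_ofReal_mul_rpow_nhdsGT_zero (c : ℝ) {e : ℝ} (he : 0 < e) :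
    Tendsto (fun t : ℝ => ENNReal.ofReal (c * t ^ e)) (𝓝[>] 0) (𝓝 0) := by
  have h := ((Real.continuousAt_rpow_const 0 e (Or.inr he.le)).tendsto.const_mul c).mono_left
    (nhdsWithin_le_nhds (s := Ioi 0))
  rw [Real.zero_rpow he.ne', mul_zero] at h
  simpa using ENNReal.tendsto_ofReal h

theorem ENNReal.tsum_ofReal_mul_geometric {B ρ : ℝ} (hB : 0 ≤ B) (hρ₀ : 0 ≤ ρ) (hρ₁ : ρ < 1) :
    ∑' k : ℕ, ENNReal.ofReal (B * ρ ^ k) = ENNReal.ofReal (B / (1 - ρ)) := by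
  rw [← ENNReal.ofReal_tsum_of_nonneg (fun k => by positivity)
    ((summable_geometric_of_lt_one hρ₀ hρ₁).mul_left B), tsum_mul_left,
    tsum_geometric_of_lt_one hρ₀ hρ₁, div_eq_mul_inv]

theorem Set.diff_iInter_subset_iUnion_diff_succ {α : Type*} (s : ℕ → Set α) :
    s 0 \ ⋂ n, s n ⊆ ⋃ n, s n \ s (n + 1) := by
  rintro x ⟨hx₀, hx⟩
  obtain ⟨m, hm⟩ := not_forall.1 (mem_iInter.not.1 hx)
  induction m with
  | zero => exact absurd hx₀ hm
  | succ m ih =>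
    by_cases hxm : x ∈ s m
    · exact mem_iUnion.2 ⟨m, hxm, hm⟩
    · exact ih hxm

section Metric
variable {X : Type*} [MetricSpace X] {A : Set X}

theorem mem_cthickening_iff_infDist_le (hA : A.Nonempty) {t : ℝ} (ht : 0 ≤ t) {x : X} :
    x ∈ cthickening t A ↔ infDist x A ≤ t := by
  rw [mem_cthickening_iff, ← ENNReal.ofReal_toReal (infEDist_ne_top hA),
    ENNReal.ofReal_le_ofReal_iff ht, infDist]

def dyadicShell (A : Set X) (ε : ℝ) (k : ℕ) : Set X :=
  cthickening (ε / 2 ^ k) A \ cthickening (ε / 2 ^ (k + 1)) A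

theorem infDist_mem_Ioc_of_mem_dyadicShell (hA : A.Nonempty) {ε : ℝ} (hε : 0 < ε) {k : ℕ}
    {x : X} (hx : x ∈ dyadicShell A ε k) : infDist x A ∈ Ioc (ε / 2 ^ k / 2) (ε / 2 ^ k) := by
  obtain ⟨hx₁, hx₂⟩ := hx
  rw [mem_cthickening_iff_infDist_le hA (by positivity)] at hx₁ hx₂
  rw [pow_succ, ← div_div] at hx₂
  exact ⟨not_le.1 hx₂, hx₁⟩

theorem cthickening_subset_closure_union_iUnion_dyadicShell {ε : ℝ} (hε : 0 < ε) :
    cthickening ε A ⊆ closure A ∪ ⋃ k, dyadicShell A ε k := by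
  intro x hx
  by_cases hxA : x ∈ ⋂ k : ℕ, cthickening (ε / 2 ^ k) A
  · refine Or.inl ?_
    rw [closure_eq_iInter_cthickening]
    refine mem_iInter₂.2 fun δ hδ => ?_
    obtain ⟨k, hk⟩ := exists_pow_lt_of_lt_one (div_pos hδ hε) one_half_lt_one
    refine cthickening_mono ?_ A (mem_iInter.1 hxA k)
    rw [lt_div_iff₀' hε] at hk
    calc ε / 2 ^ k = ε * (1 / 2) ^ k := by rw [one_div_pow, mul_one_div]
      _ ≤ δ := hk.le
  · refine Or.inr (diff_iInter_subset_iUnion_diff_succ (fun k => cthickening (ε / 2 ^ k) A) ?_)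
    exact ⟨by simpa using hx, hxA⟩

end Metric

theorem MeasureTheory.setIntegral_eq_zero_of_subsingleton_of_measure_eq_top {X E : Type*} [MeasurableSpace X]
    [Subsingleton X] [NormedAddCommGroup E] [NormedSpace ℝ E] [CompleteSpace E] {μ : Measure X}
    {s : Set X} (hs : μ s = ⊤) (f : X → E) : ∫ x in s, f x ∂μ = 0 := by
  obtain ⟨a, -⟩ := nonempty_of_measure_ne_zero (hs ▸ top_ne_zero : μ s ≠ 0)
  have hf : f = fun _ => f a := funext fun x => congrArg f (Subsingleton.elim x a)
  rw [hf, setIntegral_const, measureReal_def, hs, toReal_top, zero_smul]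

section Measure
variable {X : Type*} [MetricSpace X] [MeasurableSpace X] {μ : Measure X} {A : Set X} {Q : ℝ}

theorem IsAhlfors.measure_lt_top_of_isBounded [Nontrivial X] {K : ℝ} (hreg : IsAhlfors μ Q K)
    {B : Set X} (hB : Bornology.IsBounded B) : μ B < ⊤ := by
  obtain ⟨x⟩ := (inferInstance : Nonempty X)
  have measure_closedBall_lt_top {r : ℝ} (hr : 0 < r)
      (hrD : ENNReal.ofReal r ≤ ediam (univ : Set X)) : μ (closedBall x r) < ⊤ :=
    (hreg.2 x r hr hrD).2.trans_lt ofReal_lt_top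
  obtain ⟨R, hR, hBR⟩ := hB.subset_closedBall_lt 0 x
  by_cases hRD : ENNReal.ofReal R ≤ ediam (univ : Set X)
  · exact (measure_mono hBR).trans_lt (measure_closedBall_lt_top hR hRD)
  · have hD : ediam (univ : Set X) ≠ ⊤ := ne_top_of_lt (not_le.1 hRD)
    have hBD : B ⊆ closedBall x (diam univ) := fun y _ => dist_le_diam_of_mem' hD trivial trivial
    exact (measure_mono hBD).trans_lt <| measure_closedBall_lt_top
      (diam_pos nontrivial_univ (isBounded_iff_ediam_ne_top.2 hD)) (ofReal_toReal hD).le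

theorem uContent_eq_zero_of_le {r r' : ℝ} (h : uContent μ Q r A = 0) (hrr' : r ≤ r') :
    uContent μ Q r' A = 0 := by
  refine le_antisymm (h ▸ limsup_le_limsup ?_) zero_le
  filter_upwards [Ioo_mem_nhdsGT one_pos] with t ⟨ht₀, ht₁⟩
  exact ENNReal.div_le_div_left (ofReal_le_ofReal
    (Real.rpow_le_rpow_of_exponent_ge ht₀ ht₁.le (by linarith))) _

theorem uContent_eq_zero_of_lt {r : ℝ} (hfin : μ (cthickening 1 A) ≠ ⊤) (hQr : Q < r) :
    uContent μ Q r A = 0 := by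
  refine le_antisymm ?_ zero_le
  rw [← (ENNReal.tendsto_ofReal_mul_rpow_nhdsGT_zero (μ (cthickening 1 A)).toReal
    (sub_pos.2 hQr)).limsup_eq]
  refine limsup_le_limsup ?_
  filter_upwards [Ioo_mem_nhdsGT one_pos] with t ⟨ht₀, ht₁⟩
  calc μ (cthickening t A) / ENNReal.ofReal (t ^ (Q - r))
      ≤ μ (cthickening 1 A) / ENNReal.ofReal (t ^ (Q - r)) :=
        ENNReal.div_le_div_right (measure_mono (cthickening_mono ht₁.le A)) _
    _ = ENNReal.ofReal ((μ (cthickening 1 A)).toReal * t ^ (r - Q)) := by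
        rw [ENNReal.ofReal_mul toReal_nonneg, ofReal_toReal hfin, div_eq_mul_inv,
          ← ENNReal.ofReal_inv_of_pos (by positivity), ← Real.rpow_neg ht₀.le, neg_sub]

theorem exists_measure_cthickening_le_of_uContent_eq_zero {p : ℝ} (h : uContent μ Q p A = 0)
    (hfin : μ (cthickening 1 A) ≠ ⊤) :
    ∃ c > 0, ∀ t ∈ Ioc (0 : ℝ) 1, μ (cthickening t A) ≤ ENNReal.ofReal (c * t ^ (Q - p)) := by
  have hev : ∀ᶠ t in 𝓝[>] (0 : ℝ),
      μ (cthickening t A) / ENNReal.ofReal (t ^ (Q - p)) < 1 :=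
    eventually_lt_of_limsup_lt (h.trans_lt zero_lt_one)
  obtain ⟨i, hi, hsmall⟩ := (nhdsGT_basis (0 : ℝ)).eventually_iff.1 hev
  set δ := min (i / 2) 1
  have hδ : 0 < δ := lt_min (half_pos hi) one_pos
  set m := (μ (cthickening 1 A)).toReal
  set β := min (δ ^ (Q - p)) 1
  have hβ : 0 < β := lt_min (Real.rpow_pos_of_pos hδ _) one_pos
  refine ⟨1 + m / β, by positivity, fun t ⟨ht₀, ht₁⟩ => ?_⟩
  have htp : 0 < t ^ (Q - p) := Real.rpow_pos_of_pos ht₀ _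
  rcases le_or_gt t δ with htδ | hδt
  · have hti : t ∈ Ioo 0 i := ⟨ht₀, htδ.trans_lt ((min_le_left _ _).trans_lt (half_lt_self hi))⟩
    have := hsmall hti
    rw [ENNReal.div_lt_iff (Or.inl (ofReal_pos.2 htp).ne') (Or.inl ofReal_ne_top), one_mul] at this
    refine this.le.trans (ofReal_le_ofReal ?_)
    nlinarith [div_nonneg (toReal_nonneg : 0 ≤ m) hβ.le]
  · calc μ (cthickening t A) ≤ ENNReal.ofReal m := by
          rw [ofReal_toReal hfin]; exact measure_mono (cthickening_mono ht₁ A)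
      _ ≤ ENNReal.ofReal ((1 + m / β) * t ^ (Q - p)) := by
          refine ofReal_le_ofReal ?_
          have hβt : β ≤ t ^ (Q - p) := Real.min_rpow_one_le_rpow _ hδ hδt.le ht₁
          calc m = m / β * β := (div_mul_cancel₀ m hβ.ne').symm
            _ ≤ (1 + m / β) * t ^ (Q - p) := by
              gcongr
              linarith

theorem measure_closure_eq_zero_of_measure_cthickening_le {c e : ℝ} (he : 0 < e)
    (hA : ∀ t ∈ Ioc (0 : ℝ) 1, μ (cthickening t A) ≤ ENNReal.ofReal (c * t ^ e)) :
    μ (closure A) = 0 := by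
  refine le_antisymm (ge_of_tendsto (ENNReal.tendsto_ofReal_mul_rpow_nhdsGT_zero c he) ?_) zero_le
  filter_upwards [Ioo_mem_nhdsGT one_pos] with t ⟨ht₀, ht₁⟩
  exact (measure_mono (closure_subset_cthickening t A)).trans (hA t ⟨ht₀, ht₁.le⟩)

end Measure

section Integral
variable {X : Type*} [MetricSpace X] [MeasurableSpace X] [OpensMeasurableSpace X] {μ : Measure X}
  {A : Set X} {Q p c ξ ε : ℝ} {s : ℂ}

theorem setLIntegral_dyadicShell_norm_cpow_infDist_le (hA : A.Nonempty)
    (hμA : ∀ t ∈ Ioc (0 : ℝ) 1, μ (cthickening t A) ≤ ENNReal.ofReal (c * t ^ (Q - p)))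
    (hε : ε ∈ Ioc 0 1) (hs : ξ ≤ s.re) (k : ℕ) :
    ∫⁻ x in dyadicShell A ε k, ENNReal.ofReal ‖(infDist x A : ℂ) ^ (s - Q)‖ ∂μ
      ≤ ENNReal.ofReal (2 ^ |ξ - Q| * c * ε ^ (ξ - p) * ((2 : ℝ) ^ (p - ξ)) ^ k) := by
  set a := ε / 2 ^ k
  have ha : a ∈ Ioc 0 1 :=
    ⟨div_pos hε.1 (by positivity), (div_le_self hε.1.le (one_le_pow₀ one_le_two)).trans hε.2⟩
  have hshell : MeasurableSet (dyadicShell A ε k) :=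
    isClosed_cthickening.measurableSet.diff isClosed_cthickening.measurableSet
  calc ∫⁻ x in dyadicShell A ε k, ENNReal.ofReal ‖(infDist x A : ℂ) ^ (s - Q)‖ ∂μ
      ≤ ∫⁻ _ in dyadicShell A ε k, ENNReal.ofReal (2 ^ |ξ - Q| * a ^ (ξ - Q)) ∂μ :=
        setLIntegral_mono' hshell fun x hx => ofReal_le_ofReal <|
          Complex.norm_ofReal_cpow_sub_le (infDist_mem_Ioc_of_mem_dyadicShell hA hε.1 hx) ha.2 hs
    _ = ENNReal.ofReal (2 ^ |ξ - Q| * a ^ (ξ - Q)) * μ (dyadicShell A ε k) :=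
        setLIntegral_const _ _
    _ ≤ ENNReal.ofReal (2 ^ |ξ - Q| * a ^ (ξ - Q)) * ENNReal.ofReal (c * a ^ (Q - p)) := by
        gcongr
        exact (measure_mono sdiff_subset).trans (hμA a ha)
    _ = ENNReal.ofReal (2 ^ |ξ - Q| * c * ε ^ (ξ - p) * ((2 : ℝ) ^ (p - ξ)) ^ k) := by
        rw [← ofReal_mul (mul_nonneg (by positivity) (Real.rpow_nonneg ha.1.le _))]
        congr 1
        calc 2 ^ |ξ - Q| * a ^ (ξ - Q) * (c * a ^ (Q - p))
            = 2 ^ |ξ - Q| * c * a ^ (ξ - Q + (Q - p)) := by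
              rw [Real.rpow_add ha.1]; ring
          _ = _ := by
              rw [sub_add_sub_cancel, Real.div_two_pow_rpow hε.1.le, neg_sub]
              ring

theorem setLIntegral_closure_norm_cpow_infDist_eq_zero
    (hμA : ∀ t ∈ Ioc (0 : ℝ) 1, μ (cthickening t A) ≤ ENNReal.ofReal (c * t ^ (Q - p)))
    (hpξ : p < ξ) (hs : ξ ≤ s.re) :
    ∫⁻ x in closure A, ENNReal.ofReal ‖(infDist x A : ℂ) ^ (s - Q)‖ ∂μ = 0 := by
  -- `0 ^ 0 = 1`, so for `s = Q` the integrand is `1` on `closure A`, which is then null.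
  by_cases hsQ : s = Q
  · have hQp : 0 < Q - p := by
      rw [hsQ, Complex.ofReal_re] at hs
      linarith
    exact setLIntegral_measure_zero _ _ (measure_closure_eq_zero_of_measure_cthickening_le hQp hμA)
  · rw [setLIntegral_congr_fun measurableSet_closure fun x hx => by
      rw [infDist_zero_of_mem_closure hx, Complex.ofReal_zero,
        Complex.zero_cpow (sub_ne_zero.2 hsQ), norm_zero, ofReal_zero], lintegral_zero]

theorem setLIntegral_cthickening_norm_cpow_infDist_le (hA : A.Nonempty) (hc : 0 ≤ c)
    (hμA : ∀ t ∈ Ioc (0 : ℝ) 1, μ (cthickening t A) ≤ ENNReal.ofReal (c * t ^ (Q - p)))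
    (hpξ : p < ξ) (hε : ε ∈ Ioc 0 1) (hs : ξ ≤ s.re) :
    ∫⁻ x in cthickening ε A, ENNReal.ofReal ‖(infDist x A : ℂ) ^ (s - Q)‖ ∂μ
      ≤ ENNReal.ofReal (2 ^ |ξ - Q| * c / (1 - 2 ^ (p - ξ)) * ε ^ (ξ - p)) := by
  have hρ : (2 : ℝ) ^ (p - ξ) < 1 := Real.rpow_lt_one_of_one_lt_of_neg one_lt_two (by linarith)
  calc ∫⁻ x in cthickening ε A, ENNReal.ofReal ‖(infDist x A : ℂ) ^ (s - Q)‖ ∂μ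
      ≤ ∫⁻ x in closure A ∪ ⋃ k, dyadicShell A ε k,
          ENNReal.ofReal ‖(infDist x A : ℂ) ^ (s - Q)‖ ∂μ :=
        lintegral_mono_set (cthickening_subset_closure_union_iUnion_dyadicShell hε.1)
    _ ≤ (∫⁻ x in closure A, ENNReal.ofReal ‖(infDist x A : ℂ) ^ (s - Q)‖ ∂μ) +
          ∑' k, ∫⁻ x in dyadicShell A ε k, ENNReal.ofReal ‖(infDist x A : ℂ) ^ (s - Q)‖ ∂μ :=
        (lintegral_union_le _ _ _).trans (add_le_add_right (lintegral_iUnion_le _ _) _)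
    _ ≤ 0 + ∑' k : ℕ, ENNReal.ofReal (2 ^ |ξ - Q| * c * ε ^ (ξ - p) * ((2 : ℝ) ^ (p - ξ)) ^ k) :=
        add_le_add (setLIntegral_closure_norm_cpow_infDist_eq_zero hμA hpξ hs).le
          (ENNReal.tsum_le_tsum (setLIntegral_dyadicShell_norm_cpow_infDist_le hA hμA hε hs))
    _ = ENNReal.ofReal (2 ^ |ξ - Q| * c / (1 - 2 ^ (p - ξ)) * ε ^ (ξ - p)) := by
        rw [zero_add, ENNReal.tsum_ofReal_mul_geometric
          (mul_nonneg (by positivity) (Real.rpow_nonneg hε.1.le _)) (by positivity) hρ]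
        ring_nf

end Integral

theorem stmt7_general {X : Type*} [MetricSpace X] [MeasurableSpace X] [BorelSpace X]
    (μ : Measure X) (Q K : ℝ) (hreg : IsAhlfors μ Q K)
    (A : Set X) (hne : A.Nonempty) (hbd : Bornology.IsBounded A)
    (ξ p : ℝ) (hp₁ : uDimB μ Q A < p) (hp₂ : p < ξ) :
    ∃ C₁ : ℝ, 0 < C₁ ∧ ∀ ε : ℝ, ε ∈ Ioo (0:ℝ) 1 → ∀ s : ℂ, ξ ≤ s.re →
      ‖∫ x in cthickening ε A, (infDist x A : ℂ) ^ (s - (Q : ℂ)) ∂μ‖ ≤ C₁ * ε ^ (ξ - p) := by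
  -- Ahlfors regularity bounds `μ (cthickening 1 A)` unless `X` is a point; on a point of
  -- infinite mass the Bochner integral is `0`.
  by_cases hfin : μ (cthickening 1 A) = ⊤
  · have : Subsingleton X := not_nontrivial_iff_subsingleton.1 fun _ =>
      (hreg.measure_lt_top_of_isBounded hbd.cthickening).ne hfin
    have hAε (ε : ℝ) : cthickening ε A = univ := (hne.mono (self_subset_cthickening A)).eq_univ
    refine ⟨1, one_pos, fun ε hε s _ => ?_⟩
    rw [setIntegral_eq_zero_of_subsingleton_of_measure_eq_top (by rwa [hAε, ← hAε 1]), norm_zero]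
    exact mul_nonneg zero_le_one (Real.rpow_nonneg hε.1.le _)
  obtain ⟨r, ⟨-, hr⟩, hrp⟩ : ∃ r ∈ {r : ℝ | 0 ≤ r ∧ uContent μ Q r A = 0}, r < p :=
    exists_lt_of_csInf_lt ⟨max Q 0 + 1, by positivity,
      uContent_eq_zero_of_lt hfin (by linarith [le_max_left Q 0])⟩ hp₁
  obtain ⟨c, hc, hμA⟩ :=
    exists_measure_cthickening_le_of_uContent_eq_zero (uContent_eq_zero_of_le hr hrp.le) hfin
  have hρ : (2 : ℝ) ^ (p - ξ) < 1 := Real.rpow_lt_one_of_one_lt_of_neg one_lt_two (by linarith)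
  have hC : 0 < 2 ^ |ξ - Q| * c / (1 - 2 ^ (p - ξ)) := div_pos (by positivity) (sub_pos.2 hρ)
  refine ⟨_, hC, fun ε hε s hs => ?_⟩
  exact (norm_integral_le_lintegral_norm _).trans <|
    toReal_le_of_le_ofReal (mul_nonneg hC.le (Real.rpow_nonneg hε.1.le _)) <|
    setLIntegral_cthickening_norm_cpow_infDist_le hne hc.le hμA hp₂ ⟨hε.1, hε.2.le⟩ hs

/-- For `ξ > dim̄_B A` and `p ∈ (dim̄_B A, ξ)` there is `C₁ > 0` such that
`sup_{Re s ≥ ξ} |ζ_A(s, A_ε)| ≤ C₁ ε^(ξ-p)` for all `ε ∈ (0,1)`, where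
`ζ_A(s, A_ε) = ∫_{A_ε} d(x,A)^(s-Q) dμ(x)`. -/
theorem stmt7 {X : Type*} [MetricSpace X] [MeasurableSpace X] [BorelSpace X]
    (μ : Measure X) (Q K : ℝ) (hQ : 0 < Q) (hreg : IsAhlfors μ Q K)
    (A : Set X) (hne : A.Nonempty) (hbd : Bornology.IsBounded A)
    (ξ p : ℝ) (hξ : uDimB μ Q A < ξ) (hp₁ : uDimB μ Q A < p) (hp₂ : p < ξ) :
    ∃ C₁ : ℝ, 0 < C₁ ∧ ∀ ε : ℝ, ε ∈ Ioo (0:ℝ) 1 → ∀ s : ℂ, ξ ≤ s.re →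
      ‖∫ x in cthickening ε A, (infDist x A : ℂ) ^ (s - (Q : ℂ)) ∂μ‖ ≤ C₁ * ε ^ (ξ - p) :=
  stmt7_general μ Q K hreg A hne hbd ξ p hp₁ hp₂

end
end

section
/- Let A be a bounded nonempty subset of an Ahlfors regular metric measure space (X, d, μ) of dimension Q, and let δ > 0. Then the tube zeta function ζ̃_A(s) = ∫_0^δ t^{s−Q−1} |A_t| dt is well defined (the integral converges absolutely) and is holomorphic on the open half-plane { s ∈ ℂ : Re s > dim̄_B A }. -/
open MeasureTheory Metric Filter Set Topology ENNReal

noncomputable section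

/-!
After the shift `s ↦ s - Q`, the tube zeta function is the Mellin transform of
`t ↦ |A_t|` cut off to `(0, δ]`. Ahlfors regularity makes `|A_t|` finite (hence monotone and
locally integrable in `t`), and for `dim̄_B A < r < Re s` the vanishing of `M^{*r}(A)` gives
`|A_t| = O(t^(Q - r))` as `t → 0⁺`. The cut-off function vanishes near `∞`, so the convergence
and holomorphy theorems for Mellin transforms with power bounds at `0` and `∞` apply.
-/

open Asymptotics

theorem integrableOn_Ioc_cpow_smul_and_differentiableAt {E : Type*} [NormedAddCommGroup E]
    [NormedSpace ℂ E] {f : ℝ → E} {δ a : ℝ} {s : ℂ} (hf : LocallyIntegrableOn f (Ioc 0 δ))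
    (hf_bot : f =O[𝓝[>] 0] (· ^ a)) (hs : -a < s.re) :
    IntegrableOn (fun t : ℝ => (t : ℂ) ^ (s - 1) • f t) (Ioc 0 δ) ∧
      DifferentiableAt ℂ (fun z : ℂ => ∫ t in Ioc 0 δ, (t : ℂ) ^ (z - 1) • f t) s := by
  set F := (Ioc 0 δ).indicator f
  have hF_loc : LocallyIntegrableOn F (Ioi 0) := by
    intro x hx
    refine ⟨Ioi (x / 2), mem_nhdsWithin_of_mem_nhds (Ioi_mem_nhds (half_lt_self hx)), ?_⟩
    rw [integrableOn_indicator_iff measurableSet_Ioc]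
    exact (hf.integrableOn_compact_subset (Icc_subset_Ioc (half_pos hx) le_rfl)
      isCompact_Icc).mono_set fun t ht => ⟨ht.2.le, ht.1.2⟩
  have hF_top : F =O[atTop] (· ^ (-(s.re + 1))) := by
    refine (isBigO_zero _ _).congr' ?_ EventuallyEq.rfl
    filter_upwards [eventually_gt_atTop δ] with t ht
    exact (indicator_of_notMem (fun h => ht.not_ge h.2) f).symm
  have hF_bot : F =O[𝓝[>] 0] (· ^ (-(-a))) := by
    simpa only [neg_neg] using
      (isBigO_of_le _ fun t => norm_indicator_le_norm_self f t).trans hf_bot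
  have hmellin : mellin F = fun z => ∫ t in Ioc 0 δ, (t : ℂ) ^ (z - 1) • f t := by
    ext z
    rw [mellin, ← indicator_smul, setIntegral_indicator measurableSet_Ioc,
      inter_eq_right.mpr Ioc_subset_Ioi_self]
  have hconv : MellinConvergent F s := mellinConvergent_of_isBigO_rpow hF_loc hF_top
    (lt_add_one _) hF_bot (by linarith)
  refine ⟨?_, hmellin ▸ mellin_differentiableAt_of_isBigO_rpow hF_loc hF_top
    (lt_add_one _) hF_bot (by linarith)⟩
  rw [MellinConvergent, ← indicator_smul, integrableOn_indicator_iff measurableSet_Ioc,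
    inter_eq_left.mpr Ioc_subset_Ioi_self] at hconv
  exact hconv

theorem IsAhlfors.measure_lt_top_of_isBounded_s10 {X : Type*} [MetricSpace X] [MeasurableSpace X]
    [Nontrivial X] {μ : Measure X} {Q K : ℝ} (h : IsAhlfors μ Q K) {S : Set X}
    (hS : Bornology.IsBounded S) : μ S < ⊤ := by
  obtain ⟨x⟩ := (inferInstance : Nonempty X)
  obtain ⟨R, hR, hSR⟩ := hS.subset_closedBall_lt 0 x
  have hdiam : Metric.ediam (univ : Set X) ≠ 0 := by
    rw [Ne, Metric.ediam_eq_zero_iff]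
    exact nontrivial_univ.not_subsingleton
  obtain ⟨r, hr, hrD, hSr⟩ : ∃ r, 0 < r ∧ ENNReal.ofReal r ≤ Metric.ediam (univ : Set X) ∧
      S ⊆ closedBall x r := by
    by_cases hRD : ENNReal.ofReal R ≤ Metric.ediam (univ : Set X)
    · exact ⟨R, hR, hRD, hSR⟩
    · have hfin := (not_le.mp hRD).ne_top
      refine ⟨_, ENNReal.toReal_pos hdiam hfin, (ofReal_toReal hfin).le, fun y _ => ?_⟩
      rw [mem_closedBall, dist_edist]
      exact toReal_mono hfin (Metric.edist_le_ediam_of_mem (mem_univ y) (mem_univ x))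
  exact (measure_mono hSr).trans_lt ((h.2 x r hr hrD).2.trans_lt ofReal_lt_top)

theorem IsAhlfors.measure_cthickening_lt_top_or_eq_top {X : Type*} [MetricSpace X]
    [MeasurableSpace X] {μ : Measure X} {Q K : ℝ} (h : IsAhlfors μ Q K) {A : Set X}
    (hne : A.Nonempty) (hbd : Bornology.IsBounded A) :
    (∀ t, μ (cthickening t A) < ⊤) ∨ ∀ t, μ (cthickening t A) = ⊤ := by
  rcases subsingleton_or_nontrivial X with hX | hX
  · obtain ⟨a, ha⟩ := hne
    have huniv (t : ℝ) : cthickening t A = univ :=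
      eq_univ_of_forall fun x => Subsingleton.elim a x ▸ self_subset_cthickening A ha
    simp only [huniv]
    exact (eq_top_or_lt_top _).symm.imp (fun h _ => h) fun h _ => h
  · exact .inl fun t => h.measure_lt_top_of_isBounded_s10 hbd.cthickening

theorem uContent_eq_zero_of_lt_s10 {X : Type*} [MetricSpace X] [MeasurableSpace X] {μ : Measure X}
    {Q r δ : ℝ} {A : Set X} (hQr : Q < r) (hδ : 0 < δ) (hA : μ (cthickening δ A) ≠ ⊤) :
    uContent μ Q r A = 0 := by
  have hpow : Tendsto (fun t : ℝ => ENNReal.ofReal (t ^ (r - Q))) (𝓝[>] 0) (𝓝 0) := by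
    have := (Real.continuousAt_rpow_const 0 (r - Q) (.inr (sub_nonneg.2 hQr.le))).tendsto
    rw [Real.zero_rpow (sub_ne_zero.2 hQr.ne')] at this
    simpa using ENNReal.tendsto_ofReal (this.mono_left nhdsWithin_le_nhds)
  have hbound := ENNReal.Tendsto.const_mul hpow (.inr hA)
  rw [mul_zero] at hbound
  refine (tendsto_of_tendsto_of_tendsto_of_le_of_le' tendsto_const_nhds hbound
    (.of_forall fun _ => bot_le) ?_).limsup_eq
  filter_upwards [Ioc_mem_nhdsGT hδ] with t ht
  rw [← neg_sub, Real.rpow_neg ht.1.le, ENNReal.ofReal_inv_of_pos (Real.rpow_pos_of_pos ht.1 _),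
    div_eq_mul_inv, inv_inv]
  exact mul_le_mul_left (measure_mono (cthickening_mono ht.2 A)) _

theorem isBigO_measure_cthickening_of_uContent_eq_zero {X : Type*} [MetricSpace X]
    [MeasurableSpace X] {μ : Measure X} {Q r : ℝ} {A : Set X} (h : uContent μ Q r A = 0) :
    (fun t : ℝ => ((μ (cthickening t A)).toReal : ℂ)) =O[𝓝[>] 0] (· ^ (Q - r)) := by
  have hlt : ∀ᶠ t in 𝓝[>] 0, μ (cthickening t A) / ENNReal.ofReal (t ^ (Q - r)) < 1 :=
    eventually_lt_of_limsup_lt (h.trans_lt one_pos)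
  refine IsBigO.of_bound 1 ?_
  filter_upwards [hlt, self_mem_nhdsWithin] with t ht (ht0 : 0 < t)
  have hpow := Real.rpow_pos_of_pos ht0 (Q - r)
  rw [Complex.norm_real, one_mul, Real.norm_of_nonneg toReal_nonneg,
    Real.norm_of_nonneg hpow.le]
  rw [ENNReal.div_lt_iff (.inl (ofReal_pos.2 hpow).ne') (.inl ofReal_ne_top), one_mul] at ht
  exact toReal_le_of_le_ofReal hpow.le ht.le

theorem stmt10_general {X : Type*} [MetricSpace X] [MeasurableSpace X]
    (μ : Measure X) (Q K : ℝ) (hreg : IsAhlfors μ Q K)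
    (A : Set X) (hne : A.Nonempty) (hbd : Bornology.IsBounded A)
    (δ : ℝ) :
    ∀ s : ℂ, uDimB μ Q A < s.re →
      IntegrableOn
        (fun t : ℝ => (t : ℂ) ^ (s - (Q : ℂ) - 1) * ((μ (cthickening t A)).toReal : ℂ))
        (Ioc (0:ℝ) δ) volume ∧
      DifferentiableAt ℂ
        (fun z : ℂ => ∫ t in Ioc (0:ℝ) δ,
          (t : ℂ) ^ (z - (Q : ℂ) - 1) * ((μ (cthickening t A)).toReal : ℂ)) s := by
  intro s hs
  rcases hreg.measure_cthickening_lt_top_or_eq_top hne hbd with hfin | htop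
  · have hdim : max Q 0 + 1 ∈ {r : ℝ | 0 ≤ r ∧ uContent μ Q r A = 0} :=
      ⟨by positivity, uContent_eq_zero_of_lt_s10 (by linarith [le_max_left Q 0]) one_pos (hfin 1).ne⟩
    obtain ⟨r, ⟨-, hr⟩, hrs⟩ := exists_lt_of_csInf_lt ⟨_, hdim⟩ hs
    have hmono : Monotone fun t => (μ (cthickening t A)).toReal := fun a b hab =>
      toReal_mono (hfin b).ne (measure_mono (cthickening_mono hab A))
    have hloc := Complex.ofRealCLM.locallyIntegrableOn_comp
      (hmono.locallyIntegrable.locallyIntegrableOn (Ioc (0 : ℝ) δ) (μ := volume))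
    obtain ⟨hint, hdiff⟩ := integrableOn_Ioc_cpow_smul_and_differentiableAt hloc
      (isBigO_measure_cthickening_of_uContent_eq_zero hr) (s := s - Q)
      (by rw [Complex.sub_re, Complex.ofReal_re]; linarith)
    have hshift : DifferentiableAt ℂ (fun z : ℂ => z - Q) s := differentiableAt_id.sub_const _
    have := hdiff.comp s hshift
    exact ⟨hint, this⟩
  -- `X` is a single point of infinite mass, and `toReal ⊤ = 0` makes the integrand vanish.
  · simp only [htop, toReal_top, Complex.ofReal_zero, mul_zero, integral_zero]
    exact ⟨integrableOn_zero, differentiableAt_const _⟩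

/-- The tube zeta function `ζ̃_A(s) = ∫_0^δ t^(s-Q-1) |A_t| dt` converges absolutely
and is holomorphic on the open half-plane `{ Re s > dim̄_B A }`. -/
theorem stmt10 {X : Type*} [MetricSpace X] [MeasurableSpace X] [BorelSpace X]
    (μ : Measure X) (Q K : ℝ) (hQ : 0 < Q) (hreg : IsAhlfors μ Q K)
    (A : Set X) (hne : A.Nonempty) (hbd : Bornology.IsBounded A)
    (δ : ℝ) (hδ : 0 < δ) :
    ∀ s : ℂ, uDimB μ Q A < s.re →
      IntegrableOn
        (fun t : ℝ => (t : ℂ) ^ (s - (Q : ℂ) - 1) * ((μ (cthickening t A)).toReal : ℂ))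
        (Ioc (0:ℝ) δ) volume ∧
      DifferentiableAt ℂ
        (fun z : ℂ => ∫ t in Ioc (0:ℝ) δ,
          (t : ℂ) ^ (z - (Q : ℂ) - 1) * ((μ (cthickening t A)).toReal : ℂ)) s :=
  stmt10_general μ Q K hreg A hne hbd δ

end
end
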